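/- Let H be an ℓ-uniform hypergraph (ℓ ≥ 2), let k be a positive integer and let n ≥ 2 be an integer with ⌊k/(ℓ·log n)⌋ ≥ 1. If R(H, ⌊k/(ℓ·log n)⌋) > n, then R_ℓ(H, k) > n. -/

import Mathlib

/-!
Let `t = ⌊k / (l log n)⌋` and let `χ` be a `t`-colouring of the `l`-sets of `Fin n` with no
monochromatic `H`. Given lists of size `k` on the `l`-sets of `Fin b`, `b ≤ n`, colour `ℕ` at
random by `g : ℕ → Fin t`. An `l`-set `e` has no list colour that `g` sends to `χ e` with
probability `(1 - 1/t)^k < exp (-k/t) ≤ n^(-l)`, and there are at most `n^l` such sets, so some `g`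
serves all of them. Colouring each `e` by a list colour that `g` sends to `χ e` gives a list
colouring whose monochromatic copies of `H` would be monochromatic for `χ`. That some list
assignment forces `H` at all is the finite hypergraph Ramsey theorem, proved with
end-homogeneous sequences.
-/

/-- A hypergraph on vertex type `V`, given by its (finite) set of edges,
each edge being a finite set of vertices. -/
structure Hypergraph' (V : Type*) where
  edges : Finset (Finset V)

namespace Hypergraph'

variable {V : Type*} [DecidableEq V]

/-- `H` is `l`-uniform: every edge has exactly `l` vertices. -/
def IsUniform (H : Hypergraph' V) (l : ℕ) : Prop :=
  ∀ e ∈ H.edges, e.card = l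

/-- A colouring `c` of the edges of the complete `l`-uniform hypergraph on `Fin n`
(viewed as a colouring of all finite subsets of `Fin n`) contains a monochromatic
copy of the hypergraph `H`. -/
def HasMonoCopyIn {β : Type*} (H : Hypergraph' V) (n : ℕ) (c : Finset (Fin n) → β) : Prop :=
  ∃ (f : V → Fin n) (x : β), Function.Injective f ∧
    ∀ e ∈ H.edges, c (e.image f) = x

/-- The `k`-colour list Ramsey number of an `l`-uniform hypergraph `H`: the least `n`
for which one can assign a list of `k` colours to each `l`-subset of `Fin n` so that
every colouring of the `l`-subsets from these lists contains a monochromatic copy of `H`. -/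
noncomputable def listRamsey (H : Hypergraph' V) (l k : ℕ) : ℕ :=
  sInf { n : ℕ | ∃ L : Finset (Fin n) → Finset ℕ,
    (∀ e : Finset (Fin n), e.card = l → (L e).card = k) ∧
    ∀ c : Finset (Fin n) → ℕ, (∀ e : Finset (Fin n), e.card = l → c e ∈ L e) →
      H.HasMonoCopyIn n c }

/-- The ordinary `k`-colour Ramsey number of a hypergraph `H`: the least `n` such that
every `k`-colouring of the edges of the complete hypergraph on `Fin n` contains a
monochromatic copy of `H`. -/
noncomputable def ramsey (H : Hypergraph' V) (k : ℕ) : ℕ :=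
  sInf { n : ℕ | ∀ c : Finset (Fin n) → Fin k, H.HasMonoCopyIn n c }

end Hypergraph'

/-- The complete `l`-uniform hypergraph on `r` vertices. -/
def completeHG (r l : ℕ) : Hypergraph' (Fin r) :=
  ⟨Finset.powersetCard l Finset.univ⟩

/-- A finite set `G` of `l`-subsets of `Fin n` (an `l`-graph on `n` vertices)
contains a copy of the hypergraph `H`. -/
def IsCopyIn {V : Type*} [DecidableEq V] (H : Hypergraph' V) {n : ℕ}
    (G : Finset (Finset (Fin n))) : Prop :=
  ∃ f : V → Fin n, Function.Injective f ∧ ∀ e ∈ H.edges, e.image f ∈ G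

open Finset

/-- `RamseyArrows l k N s` is the Erdős–Rado arrow relation `N → (s)^l_k`. -/
def RamseyArrows (l k N s : ℕ) : Prop :=
  ∀ (α : Type) [DecidableEq α] (A : Finset α) (c : Finset α → Fin k), N ≤ #A →
    ∃ S ⊆ A, #S = s ∧ ∃ x, ∀ e ⊆ S, #e = l → c e = x

theorem ramseyArrows_zero (k s : ℕ) : RamseyArrows 0 k s s := by
  intro α _ A c hA
  obtain ⟨S, hSA, hS⟩ := exists_subset_card_eq hA
  exact ⟨S, hSA, hS, c ∅, fun e _ he => by rw [card_eq_zero.mp he]⟩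

section EndHomogeneous

variable {α : Type*} [DecidableEq α] {k M : ℕ}

def IsEndHomogeneous (c : Finset α → Fin k) (l : ℕ) (a : Fin M → α) (χ : Fin M → Fin k) :
    Prop :=
  ∀ i e, #e = l → (∀ y ∈ e, ∃ j, i < j ∧ a j = y) → c (insert (a i) e) = χ i

theorem IsEndHomogeneous.apply_eq {l : ℕ} {c : Finset α → Fin k} {a : Fin M → α} {χ : Fin M → Fin k}
    (hχ : IsEndHomogeneous c l a χ) {I : Finset (Fin M)} {x : Fin k} (hI : ∀ i ∈ I, χ i = x)
    {e : Finset α} (heI : e ⊆ I.image a) (he : #e = l + 1) : c e = x := by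
  set J := I.filter (a · ∈ e)
  have hJ : J.Nonempty := by
    obtain ⟨y, hy⟩ := card_pos.mp (by omega : 0 < #e)
    obtain ⟨j, hj, rfl⟩ := mem_image.mp (heI hy)
    exact ⟨j, mem_filter.mpr ⟨hj, hy⟩⟩
  obtain ⟨hj₀I, hj₀e⟩ := mem_filter.mp (J.min'_mem hJ)
  -- split `e` at the term of least index
  have key := hχ (J.min' hJ) (e.erase (a (J.min' hJ)))
    (by rw [card_erase_of_mem hj₀e, he]; rfl) fun y hy => by
      obtain ⟨j, hj, rfl⟩ := mem_image.mp (heI (mem_of_mem_erase hy))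
      refine ⟨j, lt_of_le_of_ne (J.min'_le j (mem_filter.mpr ⟨hj, mem_of_mem_erase hy⟩)) ?_, rfl⟩
      rintro rfl
      exact ne_of_mem_erase hy rfl
  rwa [insert_erase hj₀e, hI _ hj₀I] at key

end EndHomogeneous

theorem exists_isEndHomogeneous {l k : ℕ} (hl : ∀ s, ∃ N, RamseyArrows l k N s) (M : ℕ) :
    ∃ N, ∀ (α : Type) [DecidableEq α] (A : Finset α) (c : Finset α → Fin k), N ≤ #A →
      ∃ (a : Fin M → α) (χ : Fin M → Fin k), Function.Injective a ∧ (∀ i, a i ∈ A) ∧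
        IsEndHomogeneous c l a χ := by
  induction M with
  | zero => exact ⟨0, fun _ _ _ _ _ => ⟨Fin.elim0, Fin.elim0, fun i => i.elim0, fun i => i.elim0,
      fun i => i.elim0⟩⟩
  | succ M ih =>
    obtain ⟨N₀, h₀⟩ := ih
    obtain ⟨N₁, h₁⟩ := hl N₀
    refine ⟨N₁ + 1, fun α _ A c hA => ?_⟩
    obtain ⟨a₀, ha₀⟩ := card_pos.mp (by omega : 0 < #A)
    -- the later terms are taken inside a set homogeneous for `e ↦ c (insert a₀ e)`
    obtain ⟨S, hSA, hS, x, hx⟩ := h₁ α (A.erase a₀) (fun e => c (insert a₀ e))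
      (by rw [card_erase_of_mem ha₀]; omega)
    obtain ⟨a, χ, ha, haS, hχ⟩ := h₀ α S c hS.ge
    have ha₀S : a₀ ∉ S := fun h => by simpa using hSA h
    refine ⟨Fin.cons a₀ a, Fin.cons x χ, ?_, ?_, ?_⟩
    · exact Fin.cons_injective_iff.mpr ⟨fun ⟨j, hj⟩ => ha₀S (hj ▸ haS j), ha⟩
    · exact Fin.cases ha₀ fun j => mem_of_mem_erase (hSA (haS j))
    · intro i
      induction i using Fin.cases with
      | zero =>
        refine fun e he hea => hx e (fun y hy => ?_) he
        obtain ⟨j, hj, rfl⟩ := hea y hy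
        induction j using Fin.cases with
        | zero => exact absurd hj (lt_irrefl 0)
        | succ j => simpa using haS j
      | succ i =>
        refine fun e he hea => hχ i e he fun y hy => ?_
        obtain ⟨j, hij, rfl⟩ := hea y hy
        induction j using Fin.cases with
        | zero => exact absurd hij (Fin.not_lt_zero _)
        | succ j => exact ⟨j, Fin.succ_lt_succ_iff.mp hij, by simp⟩

theorem exists_ramseyArrows (l k s : ℕ) : ∃ N, RamseyArrows l k N s := by
  induction l generalizing s with
  | zero => exact ⟨s, ramseyArrows_zero k s⟩
  | succ l ih =>
    obtain ⟨N, hN⟩ := exists_isEndHomogeneous ih (k * s + 1)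
    refine ⟨N, fun α _ A c hA => ?_⟩
    obtain ⟨a, χ, ha, haA, hχ⟩ := hN α A c hA
    obtain ⟨x, -, hx⟩ := exists_lt_card_fiber_of_mul_lt_card_of_maps_to (s := univ) (t := univ)
      (f := χ) (n := s) (fun _ _ => mem_univ _) (by simp)
    obtain ⟨I, hI, hIs⟩ := exists_subset_card_eq hx.le
    refine ⟨I.image a, ?_, by rw [card_image_of_injective _ ha, hIs], x,
      fun e he hel => hχ.apply_eq (fun i hi => (mem_filter.mp (hI hi)).2) he hel⟩
    intro y hy
    obtain ⟨j, -, rfl⟩ := mem_image.mp hy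
    exact haA j

theorem card_piFinset_ite_erase_mul {ι : Type*} [Fintype ι] [DecidableEq ι] {t : ℕ}
    (S : Finset ι) (y : Fin t) :
    #(Fintype.piFinset fun i => if i ∈ S then univ.erase y else univ) * t ^ #S =
      (t - 1) ^ #S * t ^ Fintype.card ι := by
  rw [Fintype.card_piFinset]
  simp only [apply_ite card, card_erase_of_mem (mem_univ _), card_univ, Fintype.card_fin]
  rw [prod_ite, filter_mem_eq_inter, univ_inter, filter_notMem_eq_sdiff, ← compl_eq_univ_sdiff,
    prod_const, prod_const, mul_right_comm, mul_assoc, ← pow_add, card_add_card_compl]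

theorem exists_forall_exists_mem_apply_eq {β : Type*} {t k : ℕ} (ht : 0 < t) (E : Finset β)
    (L : β → Finset ℕ) (χ : β → Fin t) (hL : ∀ e ∈ E, #(L e) = k)
    (hE : #E * (t - 1) ^ k < t ^ k) :
    ∃ g : ℕ → Fin t, ∀ e ∈ E, ∃ x ∈ L e, g x = χ e := by
  classical
  let C := E.biUnion L
  let bad : β → Finset (C → Fin t) := fun e =>
    Fintype.piFinset fun i => if i ∈ (L e).subtype (· ∈ C) then univ.erase (χ e) else univ
  have hbad : ∀ e ∈ E, #(bad e) * t ^ k = (t - 1) ^ k * t ^ #C := fun e he => by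
    have hk : #((L e).subtype (· ∈ C)) = k := by
      rw [card_subtype, filter_true_of_mem (p := (· ∈ C)) fun x hx => mem_biUnion.mpr ⟨e, he, hx⟩,
        hL e he]
    have := card_piFinset_ite_erase_mul ((L e).subtype (· ∈ C)) (χ e)
    rwa [hk, Fintype.card_coe] at this
  -- union bound: a uniformly random `g` lies in `bad e` with probability `((t - 1) / t) ^ k`
  have hcount : #(E.biUnion bad) < #(univ : Finset (C → Fin t)) := by
    refine lt_of_mul_lt_mul_right (a := t ^ k) ?_ (Nat.zero_le _)
    calc #(E.biUnion bad) * t ^ k ≤ ∑ e ∈ E, #(bad e) * t ^ k := by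
          rw [← sum_mul]; gcongr; exact card_biUnion_le
      _ = #E * (t - 1) ^ k * t ^ #C := by rw [sum_congr rfl hbad]; simp [mul_assoc]
      _ < t ^ k * t ^ #C := by gcongr
      _ = #(univ : Finset (C → Fin t)) * t ^ k := by simp [mul_comm]
  obtain ⟨g, -, hg⟩ := exists_mem_notMem_of_card_lt_card hcount
  refine ⟨fun x => if h : x ∈ C then g ⟨x, h⟩ else ⟨0, ht⟩, fun e he => ?_⟩
  have hge : g ∉ bad e := fun h => hg (mem_biUnion.mpr ⟨e, he, h⟩)
  simp only [bad, Fintype.mem_piFinset, not_forall] at hge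
  obtain ⟨⟨x, hxC⟩, hx⟩ := hge
  by_cases hxL : x ∈ L e
  · refine ⟨x, hxL, ?_⟩
    simpa [hxC, hxL] using hx
  · simp [hxL] at hx

theorem choose_mul_sub_one_pow_lt {l k t m n : ℕ} (hk : 0 < k) (ht : 0 < t) (hn : 0 < n)
    (hm : m ≤ n) (htk : (t : ℝ) * (l * Real.log n) ≤ k) :
    m.choose l * (t - 1) ^ k < t ^ k := by
  have htR : (0 : ℝ) < t := by exact_mod_cast ht
  have hnR : (0 : ℝ) < n := by exact_mod_cast hn
  have hchoose : (m.choose l : ℝ) ≤ (n : ℝ) ^ l := by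
    exact_mod_cast (Nat.choose_le_pow m l).trans (Nat.pow_le_pow_left hm l)
  have hexp : 1 - 1 / (t : ℝ) < Real.exp (-(1 / t)) := by
    linarith [Real.add_one_lt_exp (neg_ne_zero.mpr (one_div_pos.mpr htR).ne')]
  have hsub : ((t - 1 : ℕ) : ℝ) ^ k < (t : ℝ) ^ k * Real.exp (-(k / t)) := by
    have h1 : 0 ≤ 1 - 1 / (t : ℝ) := by
      rw [sub_nonneg, div_le_one htR]; exact_mod_cast ht
    calc ((t - 1 : ℕ) : ℝ) ^ k = (t : ℝ) ^ k * (1 - 1 / t) ^ k := by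
          rw [Nat.cast_pred ht, ← mul_pow]; field_simp
      _ < (t : ℝ) ^ k * Real.exp (-(1 / t)) ^ k := by
          gcongr
      _ = (t : ℝ) ^ k * Real.exp (-(k / t)) := by rw [← Real.exp_nat_mul]; ring_nf
  have hexp_le : Real.exp (-(k / t)) ≤ ((n : ℝ) ^ l)⁻¹ := by
    rw [← Real.exp_log hnR, ← Real.exp_nat_mul, ← Real.exp_neg]
    gcongr
    rw [le_div_iff₀ htR]; linarith
  have : (m.choose l : ℝ) * ((t - 1 : ℕ) : ℝ) ^ k < (t : ℝ) ^ k := by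
    calc (m.choose l : ℝ) * ((t - 1 : ℕ) : ℝ) ^ k ≤ (n : ℝ) ^ l * ((t - 1 : ℕ) : ℝ) ^ k := by
          gcongr
      _ < (n : ℝ) ^ l * ((t : ℝ) ^ k * ((n : ℝ) ^ l)⁻¹) := by
          gcongr; exact hsub.trans_le (by gcongr)
      _ = (t : ℝ) ^ k := by field_simp
  exact_mod_cast this

namespace Hypergraph'

variable {V : Type*} {H : Hypergraph' V} {l : ℕ}

theorem HasMonoCopyIn.map {β γ : Type*} {n : ℕ} {c : Finset (Fin n) → β}
    {χ : Finset (Fin n) → γ} (h : H.HasMonoCopyIn n c) (g : β → γ) (hunif : H.IsUniform l)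
    (hgc : ∀ e : Finset (Fin n), #e = l → g (c e) = χ e) : H.HasMonoCopyIn n χ := by
  obtain ⟨f, x, hf, hx⟩ := h
  refine ⟨f, g x, hf, fun e he => ?_⟩
  rw [← hgc _ (by rw [card_image_of_injective _ hf, hunif e he]), hx e he]

theorem HasMonoCopyIn.of_castLE {β : Type*} {b n : ℕ} (hbn : b ≤ n) {χ : Finset (Fin n) → β}
    (h : H.HasMonoCopyIn b fun s => χ (s.image (Fin.castLE hbn))) : H.HasMonoCopyIn n χ := by
  obtain ⟨f, x, hf, hx⟩ := h
  refine ⟨Fin.castLE hbn ∘ f, x, (Fin.castLE_injective hbn).comp hf, fun e he => ?_⟩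
  rw [← image_image]
  exact hx e he

theorem hasMonoCopyIn_of_ramseyArrows [Fintype V] (hunif : H.IsUniform l) {k N : ℕ}
    (hN : RamseyArrows l k N (Fintype.card V)) (c : Finset (Fin N) → Fin k) :
    H.HasMonoCopyIn N c := by
  obtain ⟨S, -, hS, x, hx⟩ := hN (Fin N) univ c (by simp)
  let φ : V ≃ S := Fintype.equivOfCardEq (by simp [hS])
  have hφ : Function.Injective fun v => (φ v : Fin N) := Subtype.val_injective.comp φ.injective
  refine ⟨fun v => φ v, x, hφ, fun e he =>
    hx _ ?_ (by rw [card_image_of_injective _ hφ, hunif e he])⟩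
  intro y hy
  obtain ⟨v, -, rfl⟩ := mem_image.mp hy
  exact (φ v).2

theorem exists_not_hasMonoCopyIn_of_lt_ramsey {t n : ℕ} (h : n < H.ramsey t) :
    ∃ χ : Finset (Fin n) → Fin t, ¬ H.HasMonoCopyIn n χ := by
  simpa using Nat.notMem_of_lt_sInf h

theorem finite_of_lt_ramsey {t n : ℕ} (ht : 0 < t) (h : n < H.ramsey t) : Finite V := by
  obtain ⟨N, hN⟩ := Nat.nonempty_of_pos_sInf (n.zero_le.trans_lt h)
  obtain ⟨f, -, hf, -⟩ := hN fun _ => ⟨0, ht⟩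
  exact Finite.of_injective f hf

theorem lt_listRamsey [Finite V] (hunif : H.IsUniform l) {k n : ℕ} (hk : 0 < k)
    (h : ∀ b ≤ n, ∀ L : Finset (Fin b) → Finset ℕ, (∀ e, #e = l → #(L e) = k) →
      ∃ c : Finset (Fin b) → ℕ, (∀ e, #e = l → c e ∈ L e) ∧ ¬ H.HasMonoCopyIn b c) :
    n < H.listRamsey l k := by
  have := Fintype.ofFinite V
  obtain ⟨N, hN⟩ := exists_ramseyArrows l k (Fintype.card V)
  refine Nat.lt_of_succ_le (le_csInf ⟨N, fun _ => range k, fun _ _ => card_range k,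
    fun c hc => ?_⟩ ?_)
  · let c' : Finset (Fin N) → Fin k := fun e => if h : c e < k then ⟨c e, h⟩ else ⟨0, hk⟩
    refine (hasMonoCopyIn_of_ramseyArrows hunif hN c').map Fin.val hunif fun e he => ?_
    simp [c', mem_range.mp (hc e he)]
  · rintro b ⟨L, hL, hforce⟩
    by_contra! hb
    obtain ⟨c, hc, hno⟩ := h b (Nat.le_of_lt_succ hb) L hL
    exact hno (hforce c hc)

theorem exists_listColouring_not_hasMonoCopyIn (hunif : H.IsUniform l) {t k b : ℕ} (ht : 0 < t)
    {χ : Finset (Fin b) → Fin t} (hχ : ¬ H.HasMonoCopyIn b χ) (L : Finset (Fin b) → Finset ℕ)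
    (hL : ∀ e, #e = l → #(L e) = k) (hcount : b.choose l * (t - 1) ^ k < t ^ k) :
    ∃ c : Finset (Fin b) → ℕ, (∀ e, #e = l → c e ∈ L e) ∧ ¬ H.HasMonoCopyIn b c := by
  classical
  obtain ⟨g, hg⟩ := exists_forall_exists_mem_apply_eq ht (univ.powersetCard l) L χ
    (fun e he => hL e (mem_powersetCard.mp he).2) (by simpa using hcount)
  have hg' : ∀ e : Finset (Fin b), #e = l → ∃ x ∈ L e, g x = χ e := fun e he =>
    hg e (mem_powersetCard.mpr ⟨subset_univ e, he⟩)
  let c : Finset (Fin b) → ℕ := fun e => if h : ∃ x ∈ L e, g x = χ e then h.choose else 0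
  have hc : ∀ e : Finset (Fin b), #e = l → c e ∈ L e ∧ g (c e) = χ e := fun e he => by
    simpa [c, dif_pos (hg' e he)] using (hg' e he).choose_spec
  exact ⟨c, fun e he => (hc e he).1, fun hmono => hχ (hmono.map g hunif fun e he => (hc e he).2)⟩

end Hypergraph'

open Hypergraph'

theorem list_ramsey_lower_from_ramsey_general {V : Type*}
    (H : Hypergraph' V) (l : ℕ) (hunif : H.IsUniform l)
    (k n : ℕ)
    (hfloor : 1 ≤ ⌊(k : ℝ) / ((l : ℝ) * Real.log n)⌋₊)
    (hram : n < H.ramsey ⌊(k : ℝ) / ((l : ℝ) * Real.log n)⌋₊) :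
    n < H.listRamsey l k := by
  set t := ⌊(k : ℝ) / ((l : ℝ) * Real.log n)⌋₊
  have hpos : 0 < (l : ℝ) * Real.log n := by
    by_contra! h
    have := Nat.floor_of_nonpos (div_nonpos_of_nonneg_of_nonpos k.cast_nonneg h)
    omega
  have htk : (t : ℝ) * (l * Real.log n) ≤ k :=
    (le_div_iff₀ hpos).mp (Nat.floor_le (by positivity))
  have hk : 0 < k := by
    have : (1 : ℝ) ≤ t := by exact_mod_cast hfloor
    exact_mod_cast (by nlinarith : (0 : ℝ) < k)
  have hn : 0 < n := Nat.pos_of_ne_zero fun h => by simp [h] at hpos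
  obtain ⟨χ, hχ⟩ := exists_not_hasMonoCopyIn_of_lt_ramsey hram
  have := finite_of_lt_ramsey hfloor hram
  refine lt_listRamsey hunif hk fun b hb L hL =>
    exists_listColouring_not_hasMonoCopyIn hunif hfloor (fun h => hχ (h.of_castLE hb)) L hL ?_
  exact choose_mul_sub_one_pow_lt hk hfloor hn hb htk

theorem list_ramsey_lower_from_ramsey {V : Type*} [DecidableEq V]
    (H : Hypergraph' V) (l : ℕ) (hl : 2 ≤ l) (hunif : H.IsUniform l)
    (k n : ℕ) (hk : 0 < k) (hn : 2 ≤ n)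
    (hfloor : 1 ≤ ⌊(k : ℝ) / ((l : ℝ) * Real.log n)⌋₊)
    (hram : n < H.ramsey ⌊(k : ℝ) / ((l : ℝ) * Real.log n)⌋₊) :
    n < H.listRamsey l k :=
  list_ramsey_lower_from_ramsey_general H l hunif k n hfloor hram
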